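/- If K : [0,1]³ → ℝ is bounded measurable, then lim_{n→∞} ∫_0^1 ∫_0^t ∫_0^t K(s₁,s₂,t) l_n(s₁,t) l_n(s₂,t) ds₁ ds₂ dt = 0, where l_n(s,t) = (1/n) ∑_{k=1}^n 2 sin(kπs) sin(kπt). -/

import Mathlib

open Real Finset Filter MeasureTheory

noncomputable def lKer (n : ℕ) (s t : ℝ) : ℝ :=
  (1 / (n:ℝ)) * ∑ k ∈ Finset.Icc 1 n, 2 * Real.sin (k * π * s) * Real.sin (k * π * t)

section Aux
open intervalIntegral

lemma integral_cos_c (c : ℝ) (hc : c ≠ 0) : ∫ s in (0:ℝ)..1, Real.cos (c * s) = Real.sin c / c := by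
  rw [intervalIntegral.integral_comp_mul_left (fun x => Real.cos x) hc]
  simp [integral_cos, div_eq_inv_mul]

lemma sin_cast_mul_pi (m : ℤ) : Real.sin ((m:ℝ) * π) = 0 := Real.sin_int_mul_pi m

lemma orth (k j : ℕ) (hk : 1 ≤ k) (hj : 1 ≤ j) :
    ∫ s in (0:ℝ)..1, Real.sin (k*π*s) * Real.sin (j*π*s)
      = if k = j then 1/2 else 0 := by
  have h : ∀ s : ℝ, Real.sin (k*π*s) * Real.sin (j*π*s)
      = (Real.cos ((((k:ℝ)-j)*π) * s) - Real.cos ((((k:ℝ)+j)*π) * s)) / 2 := by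
    intro s
    have key := Real.two_mul_sin_mul_sin ((k:ℝ)*π*s) ((j:ℝ)*π*s)
    have e1 : (k:ℝ)*π*s - (j:ℝ)*π*s = (((k:ℝ)-j)*π) * s := by ring
    have e2 : (k:ℝ)*π*s + (j:ℝ)*π*s = (((k:ℝ)+j)*π) * s := by ring
    rw [e1, e2] at key
    linarith
  simp_rw [h]
  rw [intervalIntegral.integral_div, intervalIntegral.integral_sub
    ((Continuous.intervalIntegrable (by fun_prop) _ _))
    ((Continuous.intervalIntegrable (by fun_prop) _ _))]
  have hsum : ∫ s in (0:ℝ)..1, Real.cos ((((k:ℝ)+j)*π) * s) = 0 := by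
    have hne : ((k:ℝ)+j)*π ≠ 0 := by
      have : (0:ℝ) < (k:ℝ)+j := by positivity
      positivity
    rw [integral_cos_c _ hne]
    have : Real.sin (((k:ℝ)+j)*π) = 0 := by
      have := sin_cast_mul_pi ((k:ℤ)+j)
      push_cast at this ⊢
      exact this
    rw [this, zero_div]
  rw [hsum]
  by_cases hkj : k = j
  · subst hkj
    simp
  · have hne : ((k:ℝ)-j)*π ≠ 0 := by
      have : (k:ℝ) ≠ j := by exact_mod_cast hkj
      have h1 : (k:ℝ) - j ≠ 0 := sub_ne_zero.2 this
      exact mul_ne_zero h1 Real.pi_ne_zero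
    rw [integral_cos_c _ hne]
    have : Real.sin (((k:ℝ)-j)*π) = 0 := by
      have := sin_cast_mul_pi ((k:ℤ)-j)
      push_cast at this ⊢
      exact this
    rw [this, zero_div]
    simp [hkj]


lemma lKer_cont (n : ℕ) (t : ℝ) : Continuous (fun s => lKer n s t) := by
  unfold lKer
  exact continuous_const.mul (continuous_finset_sum _ fun k _ => by fun_prop)

lemma lKer_abs_le (n : ℕ) (s t : ℝ) : |lKer n s t| ≤ 2 := by
  rcases Nat.eq_zero_or_pos n with h | h
  · subst h; simp [lKer]
  unfold lKer
  rw [abs_mul]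
  have h1 : |∑ k ∈ Finset.Icc 1 n, 2 * Real.sin (k * π * s) * Real.sin (k * π * t)| ≤ 2 * n := by
    calc |∑ k ∈ Finset.Icc 1 n, 2 * Real.sin (k * π * s) * Real.sin (k * π * t)|
        ≤ ∑ k ∈ Finset.Icc 1 n, |2 * Real.sin (k * π * s) * Real.sin (k * π * t)| :=
          Finset.abs_sum_le_sum_abs _ _
      _ ≤ ∑ k ∈ Finset.Icc 1 n, 2 := by
          apply Finset.sum_le_sum
          intro k _
          rw [abs_mul, abs_mul, abs_two]
          nlinarith [abs_nonneg (Real.sin (k*π*s)), abs_nonneg (Real.sin (k*π*t)),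
            Real.abs_sin_le_one (k*π*s), Real.abs_sin_le_one (k*π*t)]
      _ = 2 * n := by simp [Nat.card_Icc]; ring
  have h2 : |1 / (n:ℝ)| = 1 / n := by
    rw [abs_div, abs_one, Nat.abs_cast]
  rw [h2]
  have hn : (0:ℝ) < n := by exact_mod_cast h
  rw [div_mul_eq_mul_div, one_mul, div_le_iff₀ hn]
  linarith

lemma l2bound (n : ℕ) (t : ℝ) : ∫ s in (0:ℝ)..1, (lKer n s t)^2 ≤ 2 / n := by
  rcases Nat.eq_zero_or_pos n with h | hn
  · subst h; simp [lKer]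
  set a : ℕ → ℝ := fun k => 2 * Real.sin (k*π*t) with ha
  have expand : ∀ s : ℝ, (lKer n s t)^2 = (1/(n:ℝ))^2 *
      ∑ k ∈ Finset.Icc 1 n, ∑ j ∈ Finset.Icc 1 n,
        (a k * a j) * (Real.sin (k*π*s) * Real.sin (j*π*s)) := by
    intro s
    unfold lKer
    rw [mul_pow]
    congr 1
    rw [sq, Finset.sum_mul_sum]
    apply Finset.sum_congr rfl; intro k _
    apply Finset.sum_congr rfl; intro j _
    simp only [ha]; ring
  have hInt : ∫ s in (0:ℝ)..1, (lKer n s t)^2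
      = (1/(n:ℝ))^2 * ∑ k ∈ Finset.Icc 1 n, ∑ j ∈ Finset.Icc 1 n,
        (a k * a j) * (if k = j then (1/2:ℝ) else 0) := by
    simp_rw [expand]
    rw [intervalIntegral.integral_const_mul]
    congr 1
    rw [intervalIntegral.integral_finset_sum (fun k _ =>
      (Continuous.intervalIntegrable (continuous_finset_sum _ fun j _ => by fun_prop) _ _))]
    apply Finset.sum_congr rfl; intro k hk
    rw [intervalIntegral.integral_finset_sum (fun j _ =>
      (Continuous.intervalIntegrable (by fun_prop) _ _))]
    apply Finset.sum_congr rfl; intro j hj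
    rw [intervalIntegral.integral_const_mul,
      orth k j (Finset.mem_Icc.1 hk).1 (Finset.mem_Icc.1 hj).1]
  rw [hInt]
  have hinner : ∀ k ∈ Finset.Icc 1 n,
      ∑ j ∈ Finset.Icc 1 n, (a k * a j) * (if k = j then (1/2:ℝ) else 0) = a k ^ 2 / 2 := by
    intro k hk
    have : ∀ j ∈ Finset.Icc 1 n, (a k * a j) * (if k = j then (1/2:ℝ) else 0)
        = if k = j then a k ^ 2 / 2 else 0 := by
      intro j _
      split_ifs with h
      · subst h; ring
      · ring
    rw [Finset.sum_congr rfl this, Finset.sum_ite_eq, if_pos hk]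
  rw [Finset.sum_congr rfl hinner]
  have hbound : ∑ k ∈ Finset.Icc 1 n, a k ^ 2 / 2 ≤ (n:ℝ) * 2 := by
    calc ∑ k ∈ Finset.Icc 1 n, a k ^ 2 / 2 ≤ ∑ k ∈ Finset.Icc 1 n, 2 := by
          apply Finset.sum_le_sum; intro k _
          simp only [ha]
          nlinarith [Real.sin_sq_le_one (k*π*t)]
      _ = (n:ℝ) * 2 := by simp
  have hn' : (0:ℝ) < n := by exact_mod_cast hn
  calc (1/(n:ℝ))^2 * ∑ k ∈ Finset.Icc 1 n, a k ^ 2 / 2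
      ≤ (1/(n:ℝ))^2 * ((n:ℝ) * 2) := by
        apply mul_le_mul_of_nonneg_left hbound (by positivity)
    _ = 2 / (n:ℝ) := by field_simp

lemma cs_lemma (f : ℝ → ℝ) (hf : Continuous f) (t : ℝ) (ht0 : 0 < t) (ht1 : t ≤ 1) :
    (∫ s in (0:ℝ)..t, |f s|)^2 ≤ ∫ s in (0:ℝ)..1, (f s)^2 := by
  set I := ∫ s in (0:ℝ)..t, |f s| with hI
  set J := ∫ s in (0:ℝ)..t, (f s)^2 with hJ
  have hfi : IntervalIntegrable (fun s => |f s|) volume 0 t :=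
    (hf.abs).intervalIntegrable _ _
  have hf2i : IntervalIntegrable (fun s => (f s)^2) volume 0 t :=
    (hf.pow 2).intervalIntegrable _ _
  have h0 : (0:ℝ) ≤ ∫ s in (0:ℝ)..t, (|f s| - I/t)^2 :=
    intervalIntegral.integral_nonneg ht0.le (fun s _ => sq_nonneg _)
  have hexp : ∫ s in (0:ℝ)..t, (|f s| - I/t)^2
      = J - 2*(I/t)*I + (I/t)^2 * t := by
    have : ∀ s : ℝ, (|f s| - I/t)^2 = (f s)^2 - (2*(I/t))*|f s| + (I/t)^2 := by
      intro s; rw [sub_sq, sq_abs]; ring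
    simp_rw [this]
    rw [intervalIntegral.integral_add (hf2i.sub (hfi.const_mul _))
      (intervalIntegrable_const),
      intervalIntegral.integral_sub hf2i (hfi.const_mul _),
      intervalIntegral.integral_const_mul, intervalIntegral.integral_const]
    simp [smul_eq_mul]
    ring
  rw [hexp] at h0
  have hJ1 : J ≤ ∫ s in (0:ℝ)..1, (f s)^2 := by
    apply intervalIntegral.integral_mono_interval le_rfl ht0.le ht1
    · exact Filter.Eventually.of_forall (fun s => sq_nonneg _)
    · exact (hf.pow 2).intervalIntegrable _ _
  have hJ0 : 0 ≤ J := intervalIntegral.integral_nonneg ht0.le (fun s _ => sq_nonneg _)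
  have key : I^2 ≤ t * J := by
    have h1 : (I/t)^2 * t = I^2 / t := by field_simp
    rw [h1] at h0
    have h2 : 2*(I/t)*I = 2 * (I^2 / t) := by field_simp
    rw [h2] at h0
    have : I^2 / t ≤ J := by linarith
    calc I^2 = t * (I^2 / t) := by field_simp
      _ ≤ t * J := mul_le_mul_of_nonneg_left this ht0.le
  nlinarith


theorem cesaro_kernel_triple_integral (K : ℝ → ℝ → ℝ → ℝ)
    (hK : Measurable (fun p : ℝ × ℝ × ℝ => K p.1 p.2.1 p.2.2))
    (hKb : ∃ C : ℝ, ∀ s₁ s₂ t : ℝ, s₁ ∈ Set.Icc (0:ℝ) 1 → s₂ ∈ Set.Icc (0:ℝ) 1 →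
      t ∈ Set.Icc (0:ℝ) 1 → |K s₁ s₂ t| ≤ C) :
    Tendsto (fun n : ℕ =>
        ∫ t in (0:ℝ)..1, ∫ s₁ in (0:ℝ)..t, ∫ s₂ in (0:ℝ)..t,
          K s₁ s₂ t * lKer n s₁ t * lKer n s₂ t)
      atTop (nhds 0) := by
  obtain ⟨C, hC⟩ := hKb
  set C' : ℝ := max C 0 with hC'def
  have hC'0 : 0 ≤ C' := le_max_right _ _
  have hC' : ∀ s₁ s₂ t : ℝ, s₁ ∈ Set.Icc (0:ℝ) 1 → s₂ ∈ Set.Icc (0:ℝ) 1 →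
      t ∈ Set.Icc (0:ℝ) 1 → |K s₁ s₂ t| ≤ C' := fun s₁ s₂ t h1 h2 h3 =>
    (hC s₁ s₂ t h1 h2 h3).trans (le_max_left _ _)
  have htend : Tendsto (fun n : ℕ => 2 * C' * Real.sqrt (2 / n)) atTop (nhds 0) := by
    have h1 : Tendsto (fun n : ℕ => (2:ℝ) / n) atTop (nhds 0) :=
      tendsto_const_div_atTop_nhds_zero_nat 2
    have h2 : Tendsto (fun n : ℕ => Real.sqrt (2 / n)) atTop (nhds 0) := by
      have h := (Real.continuous_sqrt.tendsto 0).comp h1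
      rw [Real.sqrt_zero] at h
      exact h
    have := h2.const_mul (2 * C')
    simpa using this
  refine squeeze_zero_norm (fun n => ?_) htend
  have key : ∀ t ∈ Set.uIoc (0:ℝ) 1,
      ‖∫ s₁ in (0:ℝ)..t, ∫ s₂ in (0:ℝ)..t,
        K s₁ s₂ t * lKer n s₁ t * lKer n s₂ t‖ ≤ 2 * C' * Real.sqrt (2 / n) := by
    intro t ht
    rw [Set.uIoc_of_le (by norm_num : (0:ℝ) ≤ 1)] at ht
    obtain ⟨ht0, ht1⟩ := ht
    set A : ℝ := ∫ s in (0:ℝ)..t, |lKer n s t| with hA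
    have hA0 : 0 ≤ A := intervalIntegral.integral_nonneg ht0.le (fun _ _ => abs_nonneg _)
    have hAle : A ≤ Real.sqrt (2 / n) := by
      have h1 : A^2 ≤ 2 / n :=
        (cs_lemma _ (lKer_cont n t) t ht0 ht1).trans (l2bound n t)
      calc A = Real.sqrt (A^2) := (Real.sqrt_sq hA0).symm
        _ ≤ Real.sqrt (2 / n) := Real.sqrt_le_sqrt h1
    have inner_bound : ∀ s₁ ∈ Set.uIoc (0:ℝ) t,
        ‖∫ s₂ in (0:ℝ)..t, K s₁ s₂ t * lKer n s₁ t * lKer n s₂ t‖ ≤ 2 * C' * A := by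
      intro s₁ hs₁
      rw [Set.uIoc_of_le ht0.le] at hs₁
      have hs₁' : s₁ ∈ Set.Icc (0:ℝ) 1 := ⟨hs₁.1.le, hs₁.2.trans ht1⟩
      have hmeas : Measurable (fun s₂ => K s₁ s₂ t * lKer n s₁ t * lKer n s₂ t) := by
        have h1 : Measurable (fun s₂ : ℝ => K s₁ s₂ t) :=
          hK.comp (measurable_const.prodMk (measurable_id.prodMk measurable_const))
        exact (h1.mul measurable_const).mul (lKer_cont n t).measurable
      have hintLHS : IntervalIntegrable
          (fun s₂ => |K s₁ s₂ t * lKer n s₁ t * lKer n s₂ t|) volume 0 t := by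
        rw [intervalIntegrable_iff_integrableOn_Ioc_of_le ht0.le]
        apply Integrable.mono' (g := fun _ => C' * 2 * 2)
          (integrableOn_const measure_Ioc_lt_top.ne)
          hmeas.abs.aestronglyMeasurable
        rw [ae_restrict_iff' measurableSet_Ioc]
        apply ae_of_all
        intro s₂ hs₂
        have hs₂' : s₂ ∈ Set.Icc (0:ℝ) 1 := ⟨hs₂.1.le, hs₂.2.trans ht1⟩
        rw [Real.norm_eq_abs, abs_abs, abs_mul, abs_mul]
        have h1 := hC' s₁ s₂ t hs₁' hs₂' ⟨ht0.le, ht1⟩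
        have h2 := lKer_abs_le n s₁ t
        have h3 := lKer_abs_le n s₂ t
        have h4 : |K s₁ s₂ t| * |lKer n s₁ t| ≤ C' * 2 :=
          mul_le_mul h1 h2 (abs_nonneg _) hC'0
        exact mul_le_mul h4 h3 (abs_nonneg _) (by positivity)
      calc ‖∫ s₂ in (0:ℝ)..t, K s₁ s₂ t * lKer n s₁ t * lKer n s₂ t‖
          ≤ ∫ s₂ in (0:ℝ)..t, |K s₁ s₂ t * lKer n s₁ t * lKer n s₂ t| := by
            rw [Real.norm_eq_abs]
            exact intervalIntegral.abs_integral_le_integral_abs ht0.le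
        _ ≤ ∫ s₂ in (0:ℝ)..t, 2 * C' * |lKer n s₂ t| := by
            apply intervalIntegral.integral_mono_on ht0.le hintLHS
              ((continuous_const.mul (lKer_cont n t).abs).intervalIntegrable _ _)
            intro s₂ hs₂
            have hs₂' : s₂ ∈ Set.Icc (0:ℝ) 1 := ⟨hs₂.1, hs₂.2.trans ht1⟩
            rw [abs_mul, abs_mul]
            have h1 := hC' s₁ s₂ t hs₁' hs₂' ⟨ht0.le, ht1⟩
            have h2 := lKer_abs_le n s₁ t
            have h4 : |K s₁ s₂ t| * |lKer n s₁ t| ≤ 2 * C' := by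
              have := mul_le_mul h1 h2 (abs_nonneg _) hC'0
              linarith
            exact mul_le_mul_of_nonneg_right h4 (abs_nonneg _)
        _ = 2 * C' * A := intervalIntegral.integral_const_mul _ _
    calc ‖∫ s₁ in (0:ℝ)..t, ∫ s₂ in (0:ℝ)..t,
            K s₁ s₂ t * lKer n s₁ t * lKer n s₂ t‖
        ≤ 2 * C' * A * |t - 0| :=
          intervalIntegral.norm_integral_le_of_norm_le_const inner_bound
      _ ≤ 2 * C' * A := by
          rw [sub_zero, abs_of_nonneg ht0.le]
          nlinarith [mul_nonneg (mul_nonneg (by norm_num : (0:ℝ) ≤ 2) hC'0) hA0]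
      _ ≤ 2 * C' * Real.sqrt (2 / n) := by nlinarith [hAle, hC'0, Real.sqrt_nonneg (2/(n:ℝ))]
  calc ‖∫ t in (0:ℝ)..1, ∫ s₁ in (0:ℝ)..t, ∫ s₂ in (0:ℝ)..t,
          K s₁ s₂ t * lKer n s₁ t * lKer n s₂ t‖
      ≤ 2 * C' * Real.sqrt (2 / n) * |1 - 0| :=
        intervalIntegral.norm_integral_le_of_norm_le_const key
    _ = 2 * C' * Real.sqrt (2 / n) := by norm_num

end Aux
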